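/- arXiv:1510.04441 — 5 statements merged into one kernel-verified Lean document; each statement's English description precedes it below -/
import Mathlib

section
/- Let (Ω, 𝔉) be a measurable space, θ : ℝ → Ω → Ω a family of maps, A a real d×d matrix and λ < 0 with |exp(tA)_{ij}| ≤ e^{λt} for all t ≥ 0 and all i,j. Let N ∈ ℝ^d with 0 ≤ N, let L ≥ 0, and let h : ℝ^d → ℝ^d be continuously differentiable with |∂h_i/∂x_j(x)| ≤ L for all x and all i,j. Let c : Ω → ℝ^d be any function. For f : Ω → ℝ^d with 0 ≤ f(ω) ≤ N componentwise for all ω and such that s ↦ f(θ_s ω) is measurable for each ω, define (𝒦f)(ω) = ∫_{−∞}^0 exp(−sA)·f(θ_s ω) ds + c(ω). Then for any two such functions f₁, f₂, sup_{ω∈Ω} ‖h((𝒦f₁)(ω)) − h((𝒦f₂)(ω))‖_∞ ≤ (−Ld²/λ) · sup_{ω∈Ω} ‖f₁(ω) − f₂(ω)‖_∞. -/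
/-! Since every entry of the Jacobian of `h` is bounded by `L`, `h` is `dL`-Lipschitz for the sup
norm, and the common shift `c ω` cancels. The entries of `exp (-sA)` are dominated by `e^{-λs}`,
so the two integrals differ in sup norm by at most `d · sup ‖f₁ - f₂‖ · ∫_{-∞}^0 e^{-λs} ds`,
which is `d · sup ‖f₁ - f₂‖ / (-λ)`. -/

open MeasureTheory Set
open scoped Matrix

namespace Matrix

variable {m n : Type*} [Fintype m] [Fintype n]

theorem norm_mulVec_le_of_abs_le (B : Matrix m n ℝ) (v : n → ℝ) {C : ℝ} (hC : 0 ≤ C)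
    (hB : ∀ i j, |B i j| ≤ C) : ‖B *ᵥ v‖ ≤ Fintype.card n * C * ‖v‖ := by
  refine (pi_norm_le_iff_of_nonneg (by positivity)).2 fun i => ?_
  calc ‖(B *ᵥ v) i‖ = |∑ j, B i j * v j| := rfl
    _ ≤ ∑ j, |B i j| * ‖v j‖ := by
        simpa only [abs_mul, Real.norm_eq_abs] using
          Finset.abs_sum_le_sum_abs (fun j => B i j * v j) Finset.univ
    _ ≤ ∑ _j : n, C * ‖v‖ :=
        Finset.sum_le_sum fun j _ => mul_le_mul (hB i j) (norm_le_pi_norm v j) (norm_nonneg _) hC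
    _ = Fintype.card n * C * ‖v‖ := by simp [mul_assoc]

theorem continuous_exp_smul [DecidableEq m] (A : Matrix m m ℝ) :
    Continuous fun t : ℝ => NormedSpace.exp (t • A) := by
  -- any normed-algebra structure will do: they all induce the product topology
  let : NormedRing (Matrix m m ℝ) := Matrix.linftyOpNormedRing
  let : NormedAlgebra ℝ (Matrix m m ℝ) := Matrix.linftyOpNormedAlgebra
  let : NormedAlgebra ℚ (Matrix m m ℝ) := .restrictScalars ℚ ℝ _
  exact NormedSpace.exp_continuous.comp (continuous_id.smul continuous_const)

end Matrix

theorem ContinuousLinearMap.opNorm_le_of_abs_apply_single_le {ι κ : Type*} [Fintype ι]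
    [DecidableEq ι] [Fintype κ] (T : (ι → ℝ) →L[ℝ] κ → ℝ) {L : ℝ} (hL : 0 ≤ L)
    (hT : ∀ i j, |T (Pi.single j 1) i| ≤ L) : ‖T‖ ≤ Fintype.card ι * L :=
  T.opNorm_le_bound (by positivity) fun v => by
    simpa using (LinearMap.toMatrix' (T : (ι → ℝ) →ₗ[ℝ] κ → ℝ)).norm_mulVec_le_of_abs_le v hL hT

theorem norm_sub_le_of_abs_fderiv_apply_single_le {ι κ : Type*} [Fintype ι] [DecidableEq ι]
    [Fintype κ] {h : (ι → ℝ) → κ → ℝ} (hh : Differentiable ℝ h) {L : ℝ} (hL : 0 ≤ L)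
    (hD : ∀ x i j, |fderiv ℝ h x (Pi.single j 1) i| ≤ L) (x y : ι → ℝ) :
    ‖h x - h y‖ ≤ Fintype.card ι * L * ‖x - y‖ :=
  convex_univ.norm_image_sub_le_of_norm_fderiv_le (fun z _ => hh z)
    (fun z _ => (fderiv ℝ h z).opNorm_le_of_abs_apply_single_le hL (hD z)) (mem_univ y)
    (mem_univ x)

theorem Pi.norm_le_norm_of_nonneg_of_le {ι : Type*} [Fintype ι] {x y : ι → ℝ} (hx : 0 ≤ x)
    (hxy : x ≤ y) : ‖x‖ ≤ ‖y‖ :=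
  (pi_norm_le_iff_of_nonneg (norm_nonneg y)).2 fun i => by
    simpa [abs_of_nonneg (hx i)] using
      (hxy i).trans ((le_abs_self _).trans (norm_le_pi_norm y i))

section ExponentiallyBoundedKernel

variable {m n : Type*} [Fintype m] [Fintype n] {K : ℝ → Matrix m n ℝ} {a : ℝ}

theorem norm_mulVec_le_of_abs_le_exp (hKa : ∀ s ≤ 0, ∀ i j, |K s i j| ≤ Real.exp (a * s))
    {s : ℝ} (hs : s ≤ 0) (v : n → ℝ) :
    ‖K s *ᵥ v‖ ≤ Fintype.card n * Real.exp (a * s) * ‖v‖ :=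
  (K s).norm_mulVec_le_of_abs_le v (Real.exp_nonneg _) (hKa s hs)

theorem integrableOn_Iic_mulVec_of_abs_le_exp (hK : Continuous K) (ha : 0 < a)
    (hKa : ∀ s ≤ 0, ∀ i j, |K s i j| ≤ Real.exp (a * s)) {u : ℝ → n → ℝ} (hu : Measurable u)
    {M : ℝ} (huM : ∀ s, ‖u s‖ ≤ M) : IntegrableOn (fun s => K s *ᵥ u s) (Iic 0) := by
  have hmeas : Measurable fun s => K s *ᵥ u s :=
    measurable_pi_iff.2 fun i => Finset.measurable_sum _ fun j _ =>
      (hK.matrix_elem i j).measurable.mul ((measurable_pi_apply j).comp hu)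
  refine Integrable.mono' (((integrableOn_exp_mul_Iic ha 0).const_mul (Fintype.card n)).mul_const M)
    hmeas.aestronglyMeasurable ?_
  refine (ae_restrict_iff' measurableSet_Iic).2 (ae_of_all _ fun s hs => ?_)
  exact (norm_mulVec_le_of_abs_le_exp hKa hs (u s)).trans (by gcongr; exact huM s)

theorem norm_setIntegral_Iic_mulVec_le (ha : 0 < a)
    (hKa : ∀ s ≤ 0, ∀ i j, |K s i j| ≤ Real.exp (a * s)) {u : ℝ → n → ℝ} {M : ℝ}
    (huM : ∀ s, ‖u s‖ ≤ M) : ‖∫ s in Iic 0, K s *ᵥ u s‖ ≤ Fintype.card n * M / a := by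
  have hbound : ∀ᵐ s ∂volume.restrict (Iic (0 : ℝ)),
      ‖K s *ᵥ u s‖ ≤ Fintype.card n * Real.exp (a * s) * M :=
    (ae_restrict_iff' measurableSet_Iic).2 (ae_of_all _ fun s hs =>
      (norm_mulVec_le_of_abs_le_exp hKa hs (u s)).trans (by gcongr; exact huM s))
  calc ‖∫ s in Iic 0, K s *ᵥ u s‖ ≤ ∫ s in Iic 0, Fintype.card n * Real.exp (a * s) * M :=
        norm_integral_le_of_norm_le
          (((integrableOn_exp_mul_Iic ha 0).const_mul _).mul_const M) hbound
    _ = Fintype.card n * M / a := by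
        rw [integral_mul_const, integral_const_mul, integral_exp_mul_Iic ha, mul_zero,
          Real.exp_zero]
        ring

end ExponentiallyBoundedKernel

theorem gain_operator_contraction_general
    {Ω : Type*} [MeasurableSpace Ω] (θ : ℝ → Ω → Ω)
    {d : ℕ}
    (A : Matrix (Fin d) (Fin d) ℝ) (l : ℝ) (hl : l < 0)
    (hA : ∀ t : ℝ, 0 ≤ t → ∀ i j : Fin d,
      |NormedSpace.exp (t • A) i j| ≤ Real.exp (l * t))
    (N : Fin d → ℝ) (L : ℝ) (hL : 0 ≤ L)
    (h : (Fin d → ℝ) → (Fin d → ℝ)) (hC1 : ContDiff ℝ 1 h)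
    (hD : ∀ x : Fin d → ℝ, ∀ i j : Fin d, |fderiv ℝ h x (Pi.single j 1) i| ≤ L)
    (c : Ω → (Fin d → ℝ))
    (f₁ f₂ : Ω → (Fin d → ℝ))
    (hrange₁ : ∀ ω : Ω, 0 ≤ f₁ ω ∧ f₁ ω ≤ N)
    (hrange₂ : ∀ ω : Ω, 0 ≤ f₂ ω ∧ f₂ ω ≤ N)
    (hmeas₁ : ∀ ω : Ω, Measurable fun s : ℝ => f₁ (θ s ω))
    (hmeas₂ : ∀ ω : Ω, Measurable fun s : ℝ => f₂ (θ s ω)) :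
    ∀ ω : Ω,
      ‖h ((∫ s in Set.Iic (0 : ℝ),
            (NormedSpace.exp ((-s) • A)).mulVec (f₁ (θ s ω))) + c ω) -
        h ((∫ s in Set.Iic (0 : ℝ),
            (NormedSpace.exp ((-s) • A)).mulVec (f₂ (θ s ω))) + c ω)‖
        ≤ (-(L * (d : ℝ) ^ 2) / l) * ⨆ ω' : Ω, ‖f₁ ω' - f₂ ω'‖ := by
  intro ω
  set K : ℝ → Matrix (Fin d) (Fin d) ℝ := fun s => NormedSpace.exp ((-s) • A)
  set M := ⨆ ω', ‖f₁ ω' - f₂ ω'‖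
  have hK : Continuous K := (Matrix.continuous_exp_smul A).comp continuous_neg
  have hKa : ∀ s ≤ 0, ∀ i j, |K s i j| ≤ Real.exp (-l * s) := fun s hs i j =>
    (hA (-s) (neg_nonneg.2 hs) i j).trans_eq (by rw [mul_neg, neg_mul])
  have hf₁ (ω') : ‖f₁ ω'‖ ≤ ‖N‖ := Pi.norm_le_norm_of_nonneg_of_le (hrange₁ ω').1 (hrange₁ ω').2
  have hf₂ (ω') : ‖f₂ ω'‖ ≤ ‖N‖ := Pi.norm_le_norm_of_nonneg_of_le (hrange₂ ω').1 (hrange₂ ω').2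
  have hbdd : BddAbove (range fun ω' => ‖f₁ ω' - f₂ ω'‖) := ⟨‖N‖ + ‖N‖,
    forall_mem_range.2 fun ω' => (norm_sub_le _ _).trans (add_le_add (hf₁ ω') (hf₂ ω'))⟩
  have hdiff : ‖(∫ s in Iic 0, K s *ᵥ f₁ (θ s ω)) - ∫ s in Iic 0, K s *ᵥ f₂ (θ s ω)‖
      ≤ d * M / -l := by
    rw [← integral_sub
      (integrableOn_Iic_mulVec_of_abs_le_exp hK (neg_pos.2 hl) hKa (hmeas₁ ω) fun s => hf₁ _)
      (integrableOn_Iic_mulVec_of_abs_le_exp hK (neg_pos.2 hl) hKa (hmeas₂ ω) fun s => hf₂ _)]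
    simp_rw [← Matrix.mulVec_sub]
    simpa only [Fintype.card_fin] using
      norm_setIntegral_Iic_mulVec_le (neg_pos.2 hl) hKa fun s => le_ciSup hbdd (θ s ω)
  calc _ ≤ Fintype.card (Fin d) * L * ‖(∫ s in Iic 0, K s *ᵥ f₁ (θ s ω)) + c ω -
        ((∫ s in Iic 0, K s *ᵥ f₂ (θ s ω)) + c ω)‖ :=
        norm_sub_le_of_abs_fderiv_apply_single_le (hC1.differentiable one_ne_zero) hL hD _ _
    _ ≤ d * L * (d * M / -l) := by
        rw [Fintype.card_fin, add_sub_add_right_eq_sub]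
        gcongr
    _ = -(L * d ^ 2) / l * M := by ring

/-- Contraction estimate of the paper's Lemma 4.1: for the input-to-state characteristic
operator `(𝒦f)(ω) = ∫_{-∞}^0 exp(−sA)·f(θ_s ω) ds + c(ω)`, the gain operator `h ∘ 𝒦`
is Lipschitz with constant `−Ld²/λ` in the uniform sup-norm metric. -/
theorem gain_operator_contraction
    {Ω : Type*} [MeasurableSpace Ω] (θ : ℝ → Ω → Ω)
    {d : ℕ} (hd : 1 ≤ d)
    (A : Matrix (Fin d) (Fin d) ℝ) (l : ℝ) (hl : l < 0)
    (hA : ∀ t : ℝ, 0 ≤ t → ∀ i j : Fin d,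
      |NormedSpace.exp (t • A) i j| ≤ Real.exp (l * t))
    (N : Fin d → ℝ) (hN : 0 ≤ N) (L : ℝ) (hL : 0 ≤ L)
    (h : (Fin d → ℝ) → (Fin d → ℝ)) (hC1 : ContDiff ℝ 1 h)
    (hD : ∀ x : Fin d → ℝ, ∀ i j : Fin d, |fderiv ℝ h x (Pi.single j 1) i| ≤ L)
    (c : Ω → (Fin d → ℝ))
    (f₁ f₂ : Ω → (Fin d → ℝ))
    (hrange₁ : ∀ ω : Ω, 0 ≤ f₁ ω ∧ f₁ ω ≤ N)
    (hrange₂ : ∀ ω : Ω, 0 ≤ f₂ ω ∧ f₂ ω ≤ N)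
    (hmeas₁ : ∀ ω : Ω, Measurable fun s : ℝ => f₁ (θ s ω))
    (hmeas₂ : ∀ ω : Ω, Measurable fun s : ℝ => f₂ (θ s ω)) :
    ∀ ω : Ω,
      ‖h ((∫ s in Set.Iic (0 : ℝ),
            (NormedSpace.exp ((-s) • A)).mulVec (f₁ (θ s ω))) + c ω) -
        h ((∫ s in Set.Iic (0 : ℝ),
            (NormedSpace.exp ((-s) • A)).mulVec (f₂ (θ s ω))) + c ω)‖
        ≤ (-(L * (d : ℝ) ^ 2) / l) * ⨆ ω' : Ω, ‖f₁ ω' - f₂ ω'‖ :=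
  gain_operator_contraction_general θ A l hl hA N L hL h hC1 hD c f₁ f₂ hrange₁ hrange₂ hmeas₁
    hmeas₂
end

section
/- Let A = [[−1, 1, 0], [1, −2, 0], [0, 1, −1]]. Then for every t ≥ 0 and all indices i, j ∈ {1,2,3}, the entries of the matrix exponential satisfy |exp(tA)_{ij}| ≤ e^{((−3+√5)/2)·t}. -/
/-!
The matrix is diagonalisable with eigenvalues `λ₂ = (-3 + √5) / 2 > λ₁ = (-3 - √5) / 2` and `-1`,
so `exp (t • A)` is an explicit combination of the modes `x = e^{λ₂ t} ≥ y = e^{λ₁ t} ≥ 0` and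
`x ≥ z = e^{-t} ≥ 0` (for `t ≥ 0`). Every entry is then `0`, `z`, a convex combination of `x` and `y`,
`(x - y) / √5`, or a convex combination of `x` and `y` minus `z`; each of these lies in `[-x, x]`.
-/

open Matrix

theorem Matrix.exp_eq_of_mul_eq_mul_diagonal {n 𝔸 : Type*} [Fintype n] [DecidableEq n]
    [NormedCommRing 𝔸] [NormedAlgebra ℚ 𝔸] [CompleteSpace 𝔸] {A P Q : Matrix n n 𝔸} {d : n → 𝔸}
    (hPQ : P * Q = 1) (hAP : A * P = P * diagonal d) :
    NormedSpace.exp A = P * diagonal (fun k => NormedSpace.exp (d k)) * Q := by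
  have hQ : P⁻¹ = Q := inv_eq_right_inv hPQ
  have hA : A = P * diagonal d * P⁻¹ := by rw [← hAP, hQ, mul_assoc, hPQ, mul_one]
  rw [hA, exp_conj P _ (.of_mul_eq_one Q hPQ), exp_diagonal, Pi.exp_def, hQ]

namespace Example51

noncomputable section

def coopMatrix : Matrix (Fin 3) (Fin 3) ℝ := !![-1, 1, 0; 1, -2, 0; 0, 1, -1]

def eigenvalues : Fin 3 → ℝ := ![(-3 + √5) / 2, (-3 - √5) / 2, -1]

def eigenbasis : Matrix (Fin 3) (Fin 3) ℝ := !![2, √5 - 1, 0; √5 - 1, -2, 0; 2, √5 - 1, 1]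

def eigenbasisInv : Matrix (Fin 3) (Fin 3) ℝ :=
  !![(5 + √5) / 20, √5 / 10, 0; √5 / 10, -(5 + √5) / 20, 0; -1, 0, 1]

def modeMatrix (x y z : ℝ) : Matrix (Fin 3) (Fin 3) ℝ :=
  !![((5 + √5) * x + (5 - √5) * y) / 10, √5 * (x - y) / 5, 0;
     √5 * (x - y) / 5, ((5 - √5) * x + (5 + √5) * y) / 10, 0;
     ((5 + √5) * x + (5 - √5) * y) / 10 - z, √5 * (x - y) / 5, z]

lemma sqrt_five_sq : √5 ^ 2 = 5 := Real.sq_sqrt (by norm_num)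

lemma eigenbasis_mul_eigenbasisInv : eigenbasis * eigenbasisInv = 1 := by
  ext i j
  fin_cases i <;> fin_cases j <;>
    simp [eigenbasis, eigenbasisInv, mul_apply, Fin.sum_univ_three, one_apply] <;>
    linarith [sqrt_five_sq]

lemma coopMatrix_mul_eigenbasis : coopMatrix * eigenbasis = eigenbasis * diagonal eigenvalues := by
  ext i j
  fin_cases i <;> fin_cases j <;>
    simp [coopMatrix, eigenbasis, eigenvalues, mul_apply, Fin.sum_univ_three] <;>
    linarith [sqrt_five_sq]

lemma exp_smul_coopMatrix (t : ℝ) :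
    NormedSpace.exp (t • coopMatrix) = modeMatrix (Real.exp ((-3 + √5) / 2 * t))
      (Real.exp ((-3 - √5) / 2 * t)) (Real.exp (-t)) := by
  have hAP : (t • coopMatrix) * eigenbasis = eigenbasis * diagonal (t • eigenvalues) := by
    rw [smul_mul, coopMatrix_mul_eigenbasis, diagonal_smul, mul_smul_comm]
  have hmodes : (fun k => NormedSpace.exp ((t • eigenvalues) k)) =
      ![Real.exp ((-3 + √5) / 2 * t), Real.exp ((-3 - √5) / 2 * t), Real.exp (-t)] := by
    ext k
    fin_cases k <;> simp [eigenvalues, ← Real.exp_eq_exp_ℝ, mul_comm]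
  rw [exp_eq_of_mul_eq_mul_diagonal eigenbasis_mul_eigenbasisInv hAP, hmodes]
  ext i j
  fin_cases i <;> fin_cases j <;>
    simp [modeMatrix, eigenbasis, eigenbasisInv, mul_apply, vecMul_diagonal, Fin.sum_univ_three] <;>
    ring_nf <;> simp only [sqrt_five_sq] <;> ring

lemma abs_modeMatrix_apply_le {x y z : ℝ} (hy : 0 ≤ y) (hyx : y ≤ x) (hz : 0 ≤ z) (hzx : z ≤ x)
    (i j : Fin 3) : |modeMatrix x y z i j| ≤ x := by
  have hs₀ : 0 ≤ √5 := Real.sqrt_nonneg 5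
  have hs₅ : √5 ≤ 5 := by nlinarith [sqrt_five_sq]
  obtain ⟨hdiag₁, hdiag₁'⟩ : 0 ≤ ((5 + √5) * x + (5 - √5) * y) / 10 ∧
      ((5 + √5) * x + (5 - √5) * y) / 10 ≤ x := ⟨by nlinarith, by nlinarith⟩
  obtain ⟨hdiag₂, hdiag₂'⟩ : 0 ≤ ((5 - √5) * x + (5 + √5) * y) / 10 ∧
      ((5 - √5) * x + (5 + √5) * y) / 10 ≤ x := ⟨by nlinarith, by nlinarith⟩
  obtain ⟨hoff, hoff'⟩ : 0 ≤ √5 * (x - y) / 5 ∧ √5 * (x - y) / 5 ≤ x := ⟨by nlinarith, by nlinarith⟩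
  fin_cases i <;> fin_cases j <;> simp only [modeMatrix, of_apply, cons_val, Fin.reduceFinMk] <;>
    exact abs_le.mpr ⟨by linarith, by linarith⟩

end

end Example51

open Example51 in
/-- Estimate `‖Φ(t)‖ = max_{i,j}|Φ_{ij}(t)| ≤ e^{λ₂ t}`, `λ₂ = (−3+√5)/2`, of the
paper's Example 5.1, verifying hypothesis (A) for the stochastic cooperative system. -/
theorem example51_exp_entry_bound :
    let A : Matrix (Fin 3) (Fin 3) ℝ := !![-1, 1, 0; 1, -2, 0; 0, 1, -1]
    ∀ t : ℝ, 0 ≤ t → ∀ i j : Fin 3,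
      |NormedSpace.exp (t • A) i j| ≤ Real.exp ((-3 + Real.sqrt 5) / 2 * t) := by
  intro A t ht i j
  rw [show A = coopMatrix from rfl, exp_smul_coopMatrix]
  have hs₀ : 0 ≤ √5 := Real.sqrt_nonneg 5
  have hs₁ : 1 ≤ √5 := Real.one_le_sqrt.mpr (by norm_num)
  apply abs_modeMatrix_apply_le (Real.exp_nonneg _) _ (Real.exp_nonneg _)
  · exact Real.exp_le_exp.mpr (by nlinarith)
  · exact Real.exp_le_exp.mpr (by nlinarith)
end

section
/- For every t ≥ 0: 2^{1/3}·e^{−(1+√2)t} + (2^{5/6} − 2^{1/3})/2 − ((2^{5/6} + 2^{1/3})/2)·e^{−2√2·t} < 1. -/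
/-!
Write `a = 2^{1/3}`, `b = 2^{5/6}` and `u = e^{-(1+√2)t}`. Since `2√2 ≤ 2(1+√2)` and `t ≥ 0`,
`e^{-2√2 t} ≥ u²`, so the left-hand side is at most `q(u) = a u + (b-a)/2 - (b+a)/2 · u²`.
Completing the square, `2(a+b)(1 - q(u)) = ((a+b)u - a)² + 2(a+b) - b²`, which is positive
because `b < 2`.
-/

open Real

lemma quadratic_lt_one {a b : ℝ} (hab : 0 < a + b) (hb : b ^ 2 < 2 * (a + b)) (u : ℝ) :
    a * u + (b - a) / 2 - (b + a) / 2 * u ^ 2 < 1 := by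
  have key : 2 * (a + b) * (1 - (a * u + (b - a) / 2 - (b + a) / 2 * u ^ 2))
      = ((a + b) * u - a) ^ 2 + (2 * (a + b) - b ^ 2) := by ring
  have : 0 < 2 * (a + b) * (1 - (a * u + (b - a) / 2 - (b + a) / 2 * u ^ 2)) := by
    rw [key]; positivity
  nlinarith

lemma exp_neg_mul_sq_le {c d t : ℝ} (hcd : c ≤ 2 * d) (ht : 0 ≤ t) :
    exp (-d * t) ^ 2 ≤ exp (-c * t) := by
  rw [sq, ← exp_add, exp_le_exp]
  nlinarith

/-- The bound `Ψ₃₁(t) < 1` from the paper's Example 5.3. -/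
theorem example53_Psi31_lt_one :
    ∀ t : ℝ, 0 ≤ t →
      (2 : ℝ) ^ ((1 : ℝ) / 3) * Real.exp (-(1 + Real.sqrt 2) * t)
        + ((2 : ℝ) ^ ((5 : ℝ) / 6) - (2 : ℝ) ^ ((1 : ℝ) / 3)) / 2
        - ((2 : ℝ) ^ ((5 : ℝ) / 6) + (2 : ℝ) ^ ((1 : ℝ) / 3)) / 2
            * Real.exp (-2 * Real.sqrt 2 * t) < 1 := by
  intro t ht
  set a := (2 : ℝ) ^ ((1 : ℝ) / 3)
  set b := (2 : ℝ) ^ ((5 : ℝ) / 6)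
  have ha : 0 < a := by positivity
  have hb : 0 < b := by positivity
  have hb2 : b < 2 := by
    simpa using rpow_lt_rpow_of_exponent_lt (by norm_num : (1 : ℝ) < 2)
      (by norm_num : (5 : ℝ) / 6 < 1)
  have hsq : exp (-(1 + √2) * t) ^ 2 ≤ exp (-2 * √2 * t) := by
    simpa only [neg_mul] using exp_neg_mul_sq_le (c := 2 * √2) (d := 1 + √2) (by linarith) ht
  calc a * exp (-(1 + √2) * t) + (b - a) / 2 - (b + a) / 2 * exp (-2 * √2 * t)
      ≤ a * exp (-(1 + √2) * t) + (b - a) / 2 - (b + a) / 2 * exp (-(1 + √2) * t) ^ 2 := by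
        gcongr
    _ < 1 := quadratic_lt_one (by linarith) (by nlinarith) _
end

section
/- For every t ≥ 0: −2·e^{−(1+√2)t} + (3/2 − √2) + (3/2 + √2)·e^{−2√2·t} ≤ 1. -/
open Real

/-- With `b = e^{-μt} ≤ a = e^{-λt}` the left side is at most `1 - c + c b`, which is `≤ 1` as `b ≤ 1`. -/
theorem neg_two_mul_exp_add_mul_exp_le_one {c lam mu t : ℝ} (hc : 0 ≤ c) (hlam : 0 ≤ lam)
    (hlam_mu : lam ≤ mu) (ht : 0 ≤ t) :
    -2 * exp (-lam * t) + (1 - c) + (2 + c) * exp (-mu * t) ≤ 1 := by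
  have h_le : exp (-mu * t) ≤ exp (-lam * t) := exp_le_exp.2 (by nlinarith)
  have h_le_one : exp (-mu * t) ≤ 1 := exp_le_one_iff.2 (by nlinarith)
  linarith [mul_nonneg hc (sub_nonneg.2 h_le_one)]

/-- The bound `Ψ₃₃(t) ≤ 1` from the paper's Example 5.3. -/
theorem example53_Psi33_le_one :
    ∀ t : ℝ, 0 ≤ t →
      -2 * Real.exp (-(1 + Real.sqrt 2) * t) + (3 / 2 - Real.sqrt 2)
        + (3 / 2 + Real.sqrt 2) * Real.exp (-2 * Real.sqrt 2 * t) ≤ 1 := by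
  intro t ht
  have h_one_lt : 1 < √2 := one_lt_sqrt_two
  have key := neg_two_mul_exp_add_mul_exp_le_one (c := √2 - 1 / 2) (lam := 1 + √2) (mu := 2 * √2)
    (by linarith) (by linarith) (by linarith) ht
  convert key using 3 <;> ring_nf
end

section
/- Let A be a real d×d matrix and λ, ε, L real numbers with λ − ε − L > 0 and ⟨x, Ax⟩ ≤ −(λ − ε)‖x‖₂² for all x ∈ ℝ^d. Let h : ℝ^d → ℝ^d be globally Lipschitz with constant L in the Euclidean norm, and let σ₁, …, σ_d ∈ ℝ. Then there exists R > 0 such that for every x ∈ ℝ^d with ‖x‖₂ ≥ R: (1/2)∑_{i=1}^d σ_i² + ⟨x, Ax + h(x)⟩ ≤ −(1/2)(λ − ε − L)‖x‖₂². -/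
/-!
A Lipschitz map grows at most affinely, so `⟪x, h x⟫ ≤ L‖x‖² + ‖h 0‖ ‖x‖`. Together with the
dissipativity of `A` this bounds `LV(x)` by `(1/2)∑σᵢ² + ‖h 0‖ ‖x‖ - (λ - ε - L)‖x‖²`, and for
large `‖x‖` half of the negative quadratic term absorbs the affine part.
-/

open scoped RealInnerProductSpace

theorem norm_le_mul_norm_add_norm_apply_zero {E F : Type*} [SeminormedAddCommGroup E]
    [SeminormedAddCommGroup F] {f : E → F} {L : ℝ}
    (hf : ∀ x y, ‖f x - f y‖ ≤ L * ‖x - y‖) (x : E) :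
    ‖f x‖ ≤ L * ‖x‖ + ‖f 0‖ := by
  have hx := hf x 0
  rw [sub_zero] at hx
  linarith [norm_le_norm_add_norm_sub' (f x) (f 0)]

theorem real_inner_apply_le_of_forall_norm_sub_le {E : Type*} [NormedAddCommGroup E]
    [InnerProductSpace ℝ E] {f : E → E} {L : ℝ}
    (hf : ∀ x y, ‖f x - f y‖ ≤ L * ‖x - y‖) (x : E) :
    ⟪x, f x⟫ ≤ L * ‖x‖ ^ 2 + ‖f 0‖ * ‖x‖ :=
  calc ⟪x, f x⟫ ≤ ‖x‖ * ‖f x‖ := real_inner_le_norm x (f x)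
    _ ≤ ‖x‖ * (L * ‖x‖ + ‖f 0‖) := by
      gcongr
      exact norm_le_mul_norm_add_norm_apply_zero hf x
    _ = L * ‖x‖ ^ 2 + ‖f 0‖ * ‖x‖ := by ring

theorem exists_pos_forall_add_mul_le_mul_sq (a b : ℝ) {c : ℝ} (hc : 0 < c) :
    ∃ R > 0, ∀ r, R ≤ r → a + b * r ≤ c * r ^ 2 := by
  refine ⟨max 1 ((|a| + |b|) / c), by positivity, fun r hr => ?_⟩
  have hr1 : 1 ≤ r := le_of_max_le_left hr
  have hrc : |a| + |b| ≤ c * r := (div_le_iff₀' hc).mp (le_of_max_le_right hr)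
  calc a + b * r ≤ |a| * r + |b| * r := by
        gcongr ?_ + ?_
        · exact (le_abs_self a).trans (le_mul_of_one_le_right (abs_nonneg a) hr1)
        · exact mul_le_mul_of_nonneg_right (le_abs_self b) (zero_le_one.trans hr1)
    _ = (|a| + |b|) * r := by ring
    _ ≤ c * r * r := by gcongr
    _ = c * r ^ 2 := by ring

/-- Inequality (NEG) of Section 6 of the paper: under `λ − ε − L > 0`, there is `R > 0`
such that `LV(x) = (1/2)∑σᵢ² + ⟨x, Ax + h(x)⟩ ≤ −(1/2)(λ−ε−L)‖x‖₂²` for `‖x‖₂ ≥ R`. -/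
theorem fokker_planck_negative_drift
    {d : ℕ} (A : Matrix (Fin d) (Fin d) ℝ) (l ε L : ℝ)
    (hpos : 0 < l - ε - L)
    (hA : ∀ x : EuclideanSpace ℝ (Fin d),
      ⟪x, ((WithLp.equiv 2 (Fin d → ℝ)).symm (A.mulVec x) : EuclideanSpace ℝ (Fin d))⟫
        ≤ -(l - ε) * ‖x‖ ^ 2)
    (h : EuclideanSpace ℝ (Fin d) → EuclideanSpace ℝ (Fin d))
    (hLip : ∀ x y : EuclideanSpace ℝ (Fin d), ‖h x - h y‖ ≤ L * ‖x - y‖)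
    (σ : Fin d → ℝ) :
    ∃ R : ℝ, 0 < R ∧ ∀ x : EuclideanSpace ℝ (Fin d), R ≤ ‖x‖ →
      (1 / 2) * ∑ i : Fin d, σ i ^ 2 +
        ⟪x, ((WithLp.equiv 2 (Fin d → ℝ)).symm (A.mulVec x) : EuclideanSpace ℝ (Fin d))
          + h x⟫
      ≤ -(1 / 2) * (l - ε - L) * ‖x‖ ^ 2 := by
  obtain ⟨R, hR, hquad⟩ :=
    exists_pos_forall_add_mul_le_mul_sq ((1 / 2) * ∑ i : Fin d, σ i ^ 2) ‖h 0‖ (half_pos hpos)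
  refine ⟨R, hR, fun x hx => ?_⟩
  rw [inner_add_right]
  linarith [hA x, real_inner_apply_le_of_forall_norm_sub_le hLip x, hquad ‖x‖ hx]
end
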